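/- Let f ∈ ℤ[x_1,…,x_n] be a nonzero polynomial with f(0)=0 which is quasi-homogeneous and nondegenerate with respect to Δ_0(f). Then there exists M such that for every prime p > M, every power q of p, and every face τ of Δ_0(f) (compact or not), the reduction of f_τ in 𝔽_q[x_1,…,x_n] has no critical point in (𝔽_q^×)^n, i.e. the partial derivatives ∂f_τ/∂x_1,…,∂f_τ/∂x_n, reduced modulo p, have no common zero in 𝔽_q^n all of whose coordinates are nonzero. -/

import Mathlib

open scoped Classical Pointwise BigOperators

noncomputable section

/-- The Newton polyhedron of `f` at the origin: the Minkowski sum of the convex hull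
of the support of `f` with the nonnegative orthant. -/
def newtonPolyhedron {R : Type} [CommRing R] {n : ℕ} (f : MvPolynomial (Fin n) R) :
    Set (Fin n → ℝ) :=
  convexHull ℝ {v : Fin n → ℝ | ∃ i ∈ f.support, v = fun j => ((i j : ℕ) : ℝ)} +
    {v : Fin n → ℝ | ∀ j, 0 ≤ v j}

/-- `1/σ(f)` is the first parameter at which the diagonal meets the Newton polyhedron. -/
def sigmaNP {R : Type} [CommRing R] {n : ℕ} (f : MvPolynomial (Fin n) R) : ℝ :=
  (sInf {t : ℝ | 0 ≤ t ∧ (fun _ => t) ∈ newtonPolyhedron f})⁻¹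

/-- `τ` is a face of `Δ`: either `Δ` itself or a nonempty set of the form
`{x ∈ Δ | L x = 0}` for an affine function `L` which is nonnegative on `Δ`. -/
def IsFaceOf {n : ℕ} (Δ τ : Set (Fin n → ℝ)) : Prop :=
  τ = Δ ∨ (τ.Nonempty ∧ ∃ (b0 : ℝ) (b : Fin n → ℝ),
    (∀ x ∈ Δ, 0 ≤ b0 + ∑ j, b j * x j) ∧ τ = {x ∈ Δ | b0 + ∑ j, b j * x j = 0})

/-- `f_I`: the subsum of the monomials of `f` whose exponent lies in `I`. -/
def faceRestrict {R : Type} [CommRing R] {n : ℕ} (f : MvPolynomial (Fin n) R)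
    (I : Set (Fin n → ℝ)) : MvPolynomial (Fin n) R :=
  ∑ i ∈ f.support.filter (fun i => (fun j => ((i j : ℕ) : ℝ)) ∈ I),
    MvPolynomial.monomial i (MvPolynomial.coeff i f)

/-- `F_0(f)`: the smallest face of the Newton polyhedron meeting the diagonal. -/
def minimalDiagonalFace {R : Type} [CommRing R] {n : ℕ} (f : MvPolynomial (Fin n) R) :
    Set (Fin n → ℝ) :=
  ⋂₀ {τ : Set (Fin n → ℝ) | IsFaceOf (newtonPolyhedron f) τ ∧ ∃ t : ℝ, (fun _ => t) ∈ τ}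

/-- `κ(f)`: the codimension in `ℝ^n` of the smallest face of the Newton polyhedron
meeting the diagonal. -/
def kappaNP {R : Type} [CommRing R] {n : ℕ} (f : MvPolynomial (Fin n) R) : ℕ :=
  n - Module.finrank ℝ (affineSpan ℝ (minimalDiagonalFace f)).direction

/-- `ν(k) = k₁ + ⋯ + kₙ`. -/
def nuSum {n : ℕ} (k : Fin n → ℕ) : ℕ := ∑ j, k j

/-- `N(f)(k) = min { k·i : i ∈ Δ₀(f) }`. -/
def NofK {R : Type} [CommRing R] {n : ℕ} (f : MvPolynomial (Fin n) R) (k : Fin n → ℕ) : ℝ :=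
  sInf {r : ℝ | ∃ v ∈ newtonPolyhedron f, r = ∑ j, (k j : ℝ) * v j}

/-- `F(f)(k) = { i ∈ Δ₀(f) : k·i = N(f)(k) }`. -/
def FofK {R : Type} [CommRing R] {n : ℕ} (f : MvPolynomial (Fin n) R) (k : Fin n → ℕ) :
    Set (Fin n → ℝ) :=
  {v ∈ newtonPolyhedron f | ∑ j, (k j : ℝ) * v j = NofK f k}

/-- `f` is quasi-homogeneous: for some positive integers `a i`, the polynomial
`f (x₁ ^ a₁, …, xₙ ^ aₙ)` is homogeneous. -/
def IsQuasiHomogeneous {R : Type} [CommRing R] {n : ℕ} (f : MvPolynomial (Fin n) R) : Prop :=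
  ∃ a : Fin n → ℕ, (∀ j, 0 < a j) ∧
    ∃ d, (MvPolynomial.bind₁ (fun j => MvPolynomial.X j ^ a j) f).IsHomogeneous d

/-- A complex polynomial has no critical point with all coordinates nonzero. -/
def NoCritOnTorus {n : ℕ} (h : MvPolynomial (Fin n) ℂ) : Prop :=
  ¬ ∃ x : Fin n → ℂ, (∀ j, x j ≠ 0) ∧ ∀ j, MvPolynomial.eval x (MvPolynomial.pderiv j h) = 0

/-- A complex polynomial is nondegenerate w.r.t. its Newton polyhedron at the origin:
for every compact face `τ`, the polynomial `f_τ` has no critical point on the torus. -/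
def NondegenerateC {n : ℕ} (f : MvPolynomial (Fin n) ℂ) : Prop :=
  ∀ τ : Set (Fin n → ℝ), IsFaceOf (newtonPolyhedron f) τ → IsCompact τ →
    NoCritOnTorus (faceRestrict f τ)

/-- An integer polynomial is nondegenerate w.r.t. its Newton polyhedron at the origin
(with coefficients viewed in `ℂ`). -/
def NondegenerateZ {n : ℕ} (f : MvPolynomial (Fin n) ℤ) : Prop :=
  ∀ τ : Set (Fin n → ℝ), IsFaceOf (newtonPolyhedron f) τ → IsCompact τ →
    NoCritOnTorus ((faceRestrict f τ).map (Int.castRingHom ℂ))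

/-- The exponential sum `S_f(1/p^m) = p^{-mn} ∑_{x ∈ {0,…,p^m-1}^n} exp(2πi f(x)/p^m)`. -/
def Ssum {n : ℕ} (f : MvPolynomial (Fin n) ℤ) (p m : ℕ) : ℂ :=
  ((p : ℂ) ^ (m * n))⁻¹ *
    ∑ x : Fin n → Fin (p ^ m),
      Complex.exp (2 * (Real.pi : ℂ) * Complex.I *
        (MvPolynomial.aeval (fun j => ((x j : ℕ) : ℂ)) f / (p : ℂ) ^ m))

/-- The local exponential sum
`T_g(1/p^m) = p^{-mn} ∑_{x ∈ {p,2p,…,p^{m-1}·p}^n} exp(2πi g(x)/p^m)`. -/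
def Tsum {n : ℕ} (g : MvPolynomial (Fin n) ℤ) (p m : ℕ) : ℂ :=
  ((p : ℂ) ^ (m * n))⁻¹ *
    ∑ x : Fin n → Fin (p ^ (m - 1)),
      Complex.exp (2 * (Real.pi : ℂ) * Complex.I *
        (MvPolynomial.aeval (fun j => ((p * ((x j : ℕ) + 1) : ℕ) : ℂ)) g / (p : ℂ) ^ m))

/-- `A(p,m,τ) = ∑_{k ∈ ℕ^n, F(f)(k) = τ, N(f)(k) ≥ m} p^{-ν(k)}`. -/
def Aterm {R : Type} [CommRing R] {n : ℕ} (f : MvPolynomial (Fin n) R) (p m : ℕ)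
    (τ : Set (Fin n → ℝ)) : ℝ :=
  ∑' k : {k : Fin n → ℕ // FofK f k = τ ∧ (m : ℝ) ≤ NofK f k}, ((p : ℝ) ^ nuSum k.1)⁻¹

/-- `B(p,m,τ) = ∑_{k ∈ ℕ^n, F(f)(k) = τ, N(f)(k) = m-1} p^{-ν(k)}`. -/
def Bterm {R : Type} [CommRing R] {n : ℕ} (f : MvPolynomial (Fin n) R) (p m : ℕ)
    (τ : Set (Fin n → ℝ)) : ℝ :=
  ∑' k : {k : Fin n → ℕ // FofK f k = τ ∧ NofK f k = (m : ℝ) - 1}, ((p : ℝ) ^ nuSum k.1)⁻¹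

/-- `E(p,τ) = (p-1)^{-n} ∑_{x ∈ {1,…,p-1}^n} exp(2πi f_τ(x)/p)`. -/
def Eterm {n : ℕ} (f : MvPolynomial (Fin n) ℤ) (p : ℕ) (τ : Set (Fin n → ℝ)) : ℂ :=
  (((p : ℂ) - 1) ^ n)⁻¹ *
    ∑ x : Fin n → Fin (p - 1),
      Complex.exp (2 * (Real.pi : ℂ) * Complex.I *
        (MvPolynomial.aeval (fun j => (((x j : ℕ) + 1 : ℕ) : ℂ)) (faceRestrict f τ) / (p : ℂ)))

/-!
Quasi-homogeneity with weights `a` puts every exponent of `f` on a hyperplane `a · x = d`,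
so `Γ = conv (Supp f)` is the compact face of `Δ₀(f)` cut out by `a · x - d`. For a face `τ`,
`τ ∩ Γ` is again a face (it is nonempty because moving a point of `τ` back along the
recession cone keeps it in `τ`), it is compact, and it contains the same exponents of `f` as
`τ`; hence `f_τ = f_{τ ∩ Γ}` has no critical point on the complex torus.

For each of the finitely many polynomials `g = f_τ`, Rabinowitsch's trick and the
Nullstellensatz for `ℚ ⊆ ℂ` put `1` in the ideal of `ℚ[x, y]` generated by the `∂g/∂xⱼ` and
`y ∏ xⱼ - 1`. Clearing denominators puts a nonzero integer `D` in the corresponding ideal of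
`ℤ[x, y]`, so in characteristic `p > |D|` the partial derivatives have no common zero on the torus.
-/

section Faces

variable {n : ℕ} {Δ τ τ₁ τ₂ K : Set (Fin n → ℝ)}

theorem IsFaceOf.subset (h : IsFaceOf Δ τ) : τ ⊆ Δ := by
  rcases h with rfl | ⟨-, b0, b, -, rfl⟩
  · exact subset_rfl
  · exact Set.sep_subset _ _

theorem IsFaceOf.nonempty (hΔ : Δ.Nonempty) (h : IsFaceOf Δ τ) : τ.Nonempty := by
  rcases h with rfl | ⟨hne, -⟩ <;> assumption

theorem IsFaceOf.inter (h₁ : IsFaceOf Δ τ₁) (h₂ : IsFaceOf Δ τ₂) (hne : (τ₁ ∩ τ₂).Nonempty) :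
    IsFaceOf Δ (τ₁ ∩ τ₂) := by
  rcases h₁ with rfl | ⟨-, b0, b, hb, rfl⟩
  · rwa [Set.inter_eq_right.2 h₂.subset]
  rcases h₂ with rfl | ⟨-, c0, c, hc, rfl⟩
  · rw [Set.inter_eq_left.2 (Set.sep_subset _ _)]
    exact Or.inr ⟨hne.mono Set.inter_subset_left, b0, b, hb, rfl⟩
  have hsum : ∀ x : Fin n → ℝ, (b0 + c0) + ∑ j, (b + c) j * x j =
      (b0 + ∑ j, b j * x j) + (c0 + ∑ j, c j * x j) := fun x => by
    simp only [Pi.add_apply, add_mul, Finset.sum_add_distrib]; ring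
  refine Or.inr ⟨hne, b0 + c0, b + c, fun x hx => hsum x ▸ add_nonneg (hb x hx) (hc x hx), ?_⟩
  ext x
  simp only [Set.mem_inter_iff, Set.mem_ofPred_eq, hsum]
  constructor
  · rintro ⟨⟨hx, hbx⟩, -, hcx⟩
    exact ⟨hx, by rw [hbx, hcx, add_zero]⟩
  · rintro ⟨hx, hbcx⟩
    have := hb x hx
    have := hc x hx
    exact ⟨⟨hx, by linarith⟩, hx, by linarith⟩

theorem IsFaceOf.isCompact_inter (h : IsFaceOf Δ τ) (hK : IsCompact K) (hKΔ : K ⊆ Δ) :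
    IsCompact (τ ∩ K) := by
  rcases h with rfl | ⟨-, b0, b, -, rfl⟩
  · rwa [Set.inter_eq_right.2 hKΔ]
  have : {x ∈ Δ | b0 + ∑ j, b j * x j = 0} ∩ K = K ∩ {x | b0 + ∑ j, b j * x j = 0} := by
    ext x
    exact ⟨fun ⟨⟨_, hx⟩, hxK⟩ => ⟨hxK, hx⟩, fun ⟨hxK, hx⟩ => ⟨⟨hKΔ hxK, hx⟩, hxK⟩⟩
  rw [this]
  exact hK.inter_right (isClosed_eq (by fun_prop) continuous_const)

theorem nonneg_of_forall_nonneg_add_mul {u s : ℝ} (h : ∀ t, 0 ≤ t → 0 ≤ u + t * s) : 0 ≤ s := by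
  by_contra! hs
  have := h ((|u| + 1) / -s) (div_nonneg (by positivity) (by linarith))
  rw [div_mul_eq_mul_div, div_neg, mul_div_assoc, div_self hs.ne, mul_one] at this
  linarith [le_abs_self u]

theorem IsFaceOf.mem_of_add_mem
    (hΔ : ∀ x ∈ Δ, ∀ v : Fin n → ℝ, (∀ j, 0 ≤ v j) → x + v ∈ Δ) (h : IsFaceOf Δ τ)
    {c w : Fin n → ℝ} (hc : c ∈ Δ) (hw : ∀ j, 0 ≤ w j) (hcw : c + w ∈ τ) : c ∈ τ := by
  rcases h with rfl | ⟨-, b0, b, hb, rfl⟩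
  · exact hc
  have hray : ∀ t : ℝ, b0 + ∑ j, b j * (c + t • w) j =
      (b0 + ∑ j, b j * c j) + t * ∑ j, b j * w j := fun t => by
    rw [Finset.mul_sum, add_assoc, ← Finset.sum_add_distrib]
    exact congrArg _ (Finset.sum_congr rfl fun j _ => by
      simp only [Pi.add_apply, Pi.smul_apply, smul_eq_mul]; ring)
  have hslope : 0 ≤ ∑ j, b j * w j := nonneg_of_forall_nonneg_add_mul fun t ht =>
    hray t ▸ hb _ (hΔ c hc _ fun j => mul_nonneg ht (hw j))
  have hcw0 := hcw.2
  rw [← one_smul ℝ w, hray, one_mul] at hcw0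
  exact ⟨hc, le_antisymm (by linarith) (hb c hc)⟩

end Faces

section NewtonPolyhedron

variable {R : Type} [CommRing R] {n : ℕ} (f : MvPolynomial (Fin n) R)

def supportExponents : Set (Fin n → ℝ) :=
  {v : Fin n → ℝ | ∃ i ∈ f.support, v = fun j => ((i j : ℕ) : ℝ)}

theorem supportExponents_finite : (supportExponents f).Finite :=
  (f.support.finite_toSet.image fun i j => ((i j : ℕ) : ℝ)).subset
    fun _ ⟨i, hi, hv⟩ => ⟨i, hi, hv.symm⟩

theorem supportExponents_nonempty (hf : f ≠ 0) : (supportExponents f).Nonempty := by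
  obtain ⟨i, hi⟩ := MvPolynomial.support_nonempty.2 hf
  exact ⟨_, i, hi, rfl⟩

theorem convexHull_supportExponents_subset_newtonPolyhedron :
    convexHull ℝ (supportExponents f) ⊆ newtonPolyhedron f :=
  fun x hx => ⟨x, hx, 0, fun _ => le_rfl, add_zero x⟩

theorem add_mem_newtonPolyhedron {x v : Fin n → ℝ} (hx : x ∈ newtonPolyhedron f)
    (hv : ∀ j, 0 ≤ v j) : x + v ∈ newtonPolyhedron f := by
  obtain ⟨c, hc, w, hw, rfl⟩ := hx
  exact ⟨c, hc, w + v, fun j => add_nonneg (hw j) (hv j), (add_assoc c w v).symm⟩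

theorem faceRestrict_inter_of_supportExponents_subset {τ K : Set (Fin n → ℝ)}
    (hK : supportExponents f ⊆ K) : faceRestrict f (τ ∩ K) = faceRestrict f τ := by
  simp only [faceRestrict, Finset.sum_filter]
  exact Finset.sum_congr rfl fun i hi => by
    simp only [Set.mem_inter_iff, and_iff_left (hK ⟨i, hi, rfl⟩)]

theorem finite_range_faceRestrict : (Set.range (faceRestrict f)).Finite :=
  (f.support.powerset.image fun s => ∑ i ∈ s, MvPolynomial.monomial i
    (MvPolynomial.coeff i f)).finite_toSet.subset <| by
    rintro _ ⟨τ, rfl⟩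
    exact Finset.mem_image.2 ⟨_, Finset.mem_powerset.2 (Finset.filter_subset _ _), rfl⟩

variable {f} {w : Fin n → ℝ} {d : ℝ}

theorem sum_mul_eq_of_mem_convexHull_supportExponents
    (hsupp : ∀ v ∈ supportExponents f, ∑ j, w j * v j = d)
    {x : Fin n → ℝ} (hx : x ∈ convexHull ℝ (supportExponents f)) :
    ∑ j, w j * x j = d := by
  have hlin : IsLinearMap ℝ fun x : Fin n → ℝ => ∑ j, w j * x j :=
    ⟨fun x y => by simp only [Pi.add_apply, mul_add, Finset.sum_add_distrib],
     fun c x => by simp only [Pi.smul_apply, smul_eq_mul, Finset.mul_sum, mul_left_comm]⟩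
  exact convexHull_min hsupp (convex_hyperplane hlin d) hx

theorem le_sum_mul_of_mem_newtonPolyhedron
    (hsupp : ∀ v ∈ supportExponents f, ∑ j, w j * v j = d)
    (hw : ∀ j, 0 ≤ w j) {x : Fin n → ℝ} (hx : x ∈ newtonPolyhedron f) :
    d ≤ ∑ j, w j * x j := by
  obtain ⟨c, hc, v, hv, rfl⟩ := hx
  simp only [Pi.add_apply, mul_add, Finset.sum_add_distrib,
    sum_mul_eq_of_mem_convexHull_supportExponents hsupp hc]
  exact le_add_of_nonneg_right (Finset.sum_nonneg fun j _ => mul_nonneg (hw j) (hv j))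

theorem mem_convexHull_supportExponents_of_sum_mul_eq
    (hsupp : ∀ v ∈ supportExponents f, ∑ j, w j * v j = d)
    (hw : ∀ j, 0 < w j) {x : Fin n → ℝ} (hx : x ∈ newtonPolyhedron f)
    (hxd : ∑ j, w j * x j = d) :
    x ∈ convexHull ℝ (supportExponents f) := by
  obtain ⟨c, hc, v, hv, rfl⟩ := hx
  simp only [Pi.add_apply, mul_add, Finset.sum_add_distrib,
    sum_mul_eq_of_mem_convexHull_supportExponents hsupp hc, add_eq_left] at hxd
  have hv0 : v = 0 := funext fun j => (mul_eq_zero.1 ((Finset.sum_eq_zero_iff_of_nonneg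
    fun j _ => mul_nonneg (hw j).le (hv j)).1 hxd j (Finset.mem_univ j))).resolve_left (hw j).ne'
  subst hv0
  simp only [add_zero]
  exact hc

theorem isFaceOf_convexHull_supportExponents
    (hsupp : ∀ v ∈ supportExponents f, ∑ j, w j * v j = d)
    (hf : f ≠ 0) (hw : ∀ j, 0 < w j) :
    IsFaceOf (newtonPolyhedron f) (convexHull ℝ (supportExponents f)) := by
  refine Or.inr ⟨(supportExponents_nonempty f hf).mono (subset_convexHull ℝ _), -d, w,
    fun x hx => ?_, ?_⟩
  · linarith [le_sum_mul_of_mem_newtonPolyhedron hsupp (fun j => (hw j).le) hx]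
  · ext x
    refine ⟨fun hx => ⟨convexHull_supportExponents_subset_newtonPolyhedron f hx, ?_⟩,
      fun ⟨hx, hxd⟩ => ?_⟩
    · rw [sum_mul_eq_of_mem_convexHull_supportExponents hsupp hx, neg_add_cancel]
    · exact mem_convexHull_supportExponents_of_sum_mul_eq hsupp hw hx (by linarith)

theorem exists_isCompact_isFaceOf_faceRestrict_eq
    (hsupp : ∀ v ∈ supportExponents f, ∑ j, w j * v j = d)
    (hf : f ≠ 0) (hw : ∀ j, 0 < w j) {τ : Set (Fin n → ℝ)}
    (hτ : IsFaceOf (newtonPolyhedron f) τ) :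
    ∃ τ', IsFaceOf (newtonPolyhedron f) τ' ∧ IsCompact τ' ∧
      faceRestrict f τ' = faceRestrict f τ := by
  set Γ := convexHull ℝ (supportExponents f)
  have hΓΔ : Γ ⊆ newtonPolyhedron f := convexHull_supportExponents_subset_newtonPolyhedron f
  obtain ⟨x, hx⟩ :=
    hτ.nonempty (((supportExponents_nonempty f hf).mono (subset_convexHull ℝ _)).mono hΓΔ)
  obtain ⟨c, hc, v, hv, rfl⟩ := hτ.subset hx
  have hcτ : c ∈ τ :=
    hτ.mem_of_add_mem (fun _ hx _ hv => add_mem_newtonPolyhedron f hx hv) (hΓΔ hc) hv hx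
  exact ⟨τ ∩ Γ,
    hτ.inter (isFaceOf_convexHull_supportExponents hsupp hf hw) ⟨c, hcτ, hc⟩,
    hτ.isCompact_inter ((supportExponents_finite f).isCompact_convexHull (𝕜 := ℝ)) hΓΔ,
    faceRestrict_inter_of_supportExponents_subset f (subset_convexHull ℝ _)⟩

end NewtonPolyhedron

namespace MvPolynomial

open Filter

variable {σ ι R : Type*} [CommRing R]

theorem span_eq_top_of_not_exists_common_zero {k K : Type*} [Field k] [Field K] [Algebra k K]
    [IsAlgClosed K] [Finite σ] {S : Set (MvPolynomial σ k)}
    (h : ¬ ∃ x : σ → K, ∀ q ∈ S, aeval x q = 0) : Ideal.span S = ⊤ := by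
  have hempty : zeroLocus K (Ideal.span S) = ∅ := by
    rw [zeroLocus_span, Set.eq_empty_iff_forall_notMem]
    exact fun x hx => h ⟨x, hx⟩
  rw [← Ideal.radical_eq_top, ← vanishingIdeal_zeroLocus_eq_radical (K := K), hempty,
    vanishingIdeal_empty]

attribute [local instance] algebraMvPolynomial in
theorem exists_C_mem_of_one_mem_map {K : Type*} [Nontrivial R] [Field K] [Algebra R K]
    [IsFractionRing R K] {I : Ideal (MvPolynomial σ R)}
    (h : 1 ∈ I.map (map (algebraMap R K))) : ∃ D : R, D ≠ 0 ∧ C D ∈ I := by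
  obtain ⟨⟨⟨x, hx⟩, ⟨_, hCD⟩⟩, hxD⟩ :=
    (IsLocalization.mem_map_algebraMap_iff ((nonZeroDivisors R).map C) (MvPolynomial σ K)).1 h
  obtain ⟨D, hD, rfl⟩ := Submonoid.mem_map.1 hCD
  refine ⟨D, nonZeroDivisors.ne_zero hD, ?_⟩
  rw [one_mul, algebraMap_def, (map_injective _ (IsFractionRing.injective R K)).eq_iff] at hxD
  exact (show C D = x from hxD) ▸ hx

section Fintype

variable [Fintype σ]

theorem bind₁_X_pow_monomial (a : σ → ℕ) (i : σ →₀ ℕ) (c : R) :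
    bind₁ (fun j => X j ^ a j) (monomial i c) =
      monomial (Finsupp.equivFunOnFinite.symm fun j => a j * i j) c := by
  rw [bind₁_monomial, monomial_eq, Finsupp.prod_fintype _ _ fun _ => pow_zero _]
  change C c * i.prod (fun j e => (X j ^ a j) ^ e) = _
  rw [Finsupp.prod_fintype _ _ fun _ => pow_zero _]
  simp [pow_mul]

theorem coeff_bind₁_X_pow {a : σ → ℕ} (ha : ∀ j, 0 < a j) (f : MvPolynomial σ R)
    (i : σ →₀ ℕ) :
    coeff (Finsupp.equivFunOnFinite.symm fun j => a j * i j) (bind₁ (fun j => X j ^ a j) f) =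
      coeff i f := by
  conv_lhs => rw [f.as_sum, map_sum]
  simp only [bind₁_X_pow_monomial, coeff_sum, coeff_monomial]
  rw [Finset.sum_eq_single i]
  · simp
  · intro k _ hki
    rw [if_neg]
    intro h
    refine hki (Finsupp.ext fun j => Nat.eq_of_mul_eq_mul_left (ha j) ?_)
    simpa using congr($h j)
  · simp +contextual

theorem sum_mul_eq_of_isHomogeneous_bind₁_X_pow {f : MvPolynomial σ R} {a : σ → ℕ}
    (ha : ∀ j, 0 < a j) {d : ℕ} (hd : (bind₁ (fun j => X j ^ a j) f).IsHomogeneous d)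
    {i : σ →₀ ℕ} (hi : i ∈ f.support) : ∑ j, a j * i j = d := by
  have := hd (by rwa [coeff_bind₁_X_pow ha, ← mem_support_iff])
  simpa [Finsupp.weight_apply, Finsupp.sum_fintype, mul_comm] using this

/-- Rabinowitsch's trick: the common zeros of this family are the common zeros of `g` on the
torus, the extra variable `X none` standing for `(∏ j, X j)⁻¹`. -/
def rabinowitsch (g : ι → MvPolynomial σ R) :
    Option ι → MvPolynomial (Option σ) R
  | none => X none * ∏ j, X (some j) - 1
  | some i => rename some (g i)

theorem exists_common_zero_rabinowitsch_iff {K : Type*} [Field K] (φ : R →+* K)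
    (g : ι → MvPolynomial σ R) :
    (∃ z : Option σ → K, ∀ o, eval z ((rabinowitsch g o).map φ) = 0) ↔
      ∃ x : σ → K, (∀ j, x j ≠ 0) ∧ ∀ i, eval x ((g i).map φ) = 0 := by
  simp only [eval_map]
  constructor
  · rintro ⟨z, hz⟩
    have hunit : z none * ∏ j, z (some j) = 1 := by
      simpa [rabinowitsch, sub_eq_zero] using hz none
    refine ⟨z ∘ some, fun j hj => ?_, fun i => ?_⟩
    · have : ∏ j, z (some j) = 0 := Finset.prod_eq_zero (Finset.mem_univ j) hj
      simp [this] at hunit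
    · simpa [rabinowitsch, eval₂_rename] using hz (some i)
  · rintro ⟨x, hx, hgx⟩
    refine ⟨fun o => o.elim (∏ j, x j)⁻¹ x, ?_⟩
    rintro (_ | i)
    · simp [rabinowitsch, Finset.prod_ne_zero_iff.2 fun j _ => hx j]
    · simpa [rabinowitsch, eval₂_rename, Function.comp_def] using hgx i

theorem eventually_not_exists_common_zero_on_torus (g : ι → MvPolynomial σ ℤ)
    (hg : ¬ ∃ x : σ → ℂ, (∀ j, x j ≠ 0) ∧
      ∀ i, eval x ((g i).map (Int.castRingHom ℂ)) = 0) :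
    ∀ᶠ p in atTop, ∀ (F : Type*) [Field F] [CharP F p],
      ¬ ∃ x : σ → F, (∀ j, x j ≠ 0) ∧
        ∀ i, eval x ((g i).map (Int.castRingHom F)) = 0 := by
  set G := rabinowitsch g
  have htop : Ideal.span (Set.range fun o => (G o).map (Int.castRingHom ℚ)) = ⊤ := by
    refine span_eq_top_of_not_exists_common_zero (K := ℂ) fun ⟨z, hz⟩ =>
      hg ((exists_common_zero_rabinowitsch_iff _ g).1 ⟨z, fun o => ?_⟩)
    have hzo := hz _ ⟨o, rfl⟩
    rwa [aeval_def, eval₂_map,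
      RingHom.ext_int ((algebraMap ℚ ℂ).comp _) (Int.castRingHom ℂ), ← eval_map] at hzo
  obtain ⟨D, hD, hDG⟩ := exists_C_mem_of_one_mem_map (K := ℚ) (I := Ideal.span (Set.range G))
    (by rw [Ideal.map_span, ← Set.range_comp]; exact htop ▸ Submodule.mem_top)
  filter_upwards [eventually_gt_atTop D.natAbs] with p hp F _ _
  rw [← exists_common_zero_rabinowitsch_iff]
  rintro ⟨z, hz⟩
  have hker : Ideal.span (Set.range G) ≤ RingHom.ker ((eval z).comp (map (Int.castRingHom F))) :=
    Ideal.span_le.2 (Set.range_subset_iff.2 hz)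
  have hDF : (D : F) = 0 := by simpa using hker hDG
  rw [CharP.intCast_eq_zero_iff F p, Int.natCast_dvd] at hDF
  exact hp.not_ge (Nat.le_of_dvd (Int.natAbs_pos.2 hD) hDF)

end Fintype

end MvPolynomial

theorem stmt18_general {n : ℕ} (f : MvPolynomial (Fin n) ℤ) (hf : f ≠ 0)
    (hqh : IsQuasiHomogeneous f)
    (hnd : NondegenerateZ f) :
    ∃ M : ℕ, ∀ p : ℕ, p.Prime → M < p →
      ∀ (F : Type) [Field F] [Fintype F] [Algebra (ZMod p) F],
        ∀ τ : Set (Fin n → ℝ), IsFaceOf (newtonPolyhedron f) τ →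
          ¬ ∃ x : Fin n → F, (∀ j, x j ≠ 0) ∧
            ∀ j, MvPolynomial.eval x
              ((MvPolynomial.pderiv j (faceRestrict f τ)).map (Int.castRingHom F)) = 0 := by
  obtain ⟨a, ha, d, hd⟩ := hqh
  have hsupp : ∀ v ∈ supportExponents f, ∑ j, (a j : ℝ) * v j = d := by
    rintro _ ⟨i, hi, rfl⟩
    show ∑ j, (a j : ℝ) * (i j : ℝ) = d
    exact_mod_cast MvPolynomial.sum_mul_eq_of_isHomogeneous_bind₁_X_pow ha hd hi
  set S := {g ∈ Set.range (faceRestrict f) | NoCritOnTorus (g.map (Int.castRingHom ℂ))}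
  have hS : ∀ᶠ p in Filter.atTop, ∀ g ∈ S, ∀ (F : Type) [Field F] [CharP F p],
      ¬ ∃ x : Fin n → F, (∀ j, x j ≠ 0) ∧
        ∀ j, MvPolynomial.eval x ((MvPolynomial.pderiv j g).map (Int.castRingHom F)) = 0 :=
    (Filter.eventually_all_finite ((finite_range_faceRestrict f).subset (Set.sep_subset _ _))).2
      fun g hg => MvPolynomial.eventually_not_exists_common_zero_on_torus _
        (by simpa only [NoCritOnTorus, MvPolynomial.pderiv_map] using hg.2)
  obtain ⟨M, hM⟩ := Filter.eventually_atTop.1 hS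
  refine ⟨M, fun p hp hMp F _ _ _ τ hτ => ?_⟩
  have : Fact p.Prime := ⟨hp⟩
  have : CharP F p := charP_of_injective_algebraMap (algebraMap (ZMod p) F).injective p
  obtain ⟨τ', hτ', hτ'c, heq⟩ :=
    exists_isCompact_isFaceOf_faceRestrict_eq hsupp hf (fun j => Nat.cast_pos.2 (ha j)) hτ
  exact hM p hMp.le _ ⟨⟨τ, rfl⟩, heq ▸ hnd τ' hτ' hτ'c⟩ F

/-- For a nonzero quasi-homogeneous nondegenerate polynomial `f` over `ℤ` with
`f(0) = 0`, for all primes `p` large enough, all finite fields `F` of characteristic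
`p`, and every face `τ` of `Δ₀(f)` (compact or not), the reduction of `f_τ` mod `p`
has no critical point in `(F^×)^n`. -/
theorem stmt18 {n : ℕ} (f : MvPolynomial (Fin n) ℤ) (hf : f ≠ 0)
    (hf0 : MvPolynomial.coeff 0 f = 0) (hqh : IsQuasiHomogeneous f)
    (hnd : NondegenerateZ f) :
    ∃ M : ℕ, ∀ p : ℕ, p.Prime → M < p →
      ∀ (F : Type) [Field F] [Fintype F] [Algebra (ZMod p) F],
        ∀ τ : Set (Fin n → ℝ), IsFaceOf (newtonPolyhedron f) τ →
          ¬ ∃ x : Fin n → F, (∀ j, x j ≠ 0) ∧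
            ∀ j, MvPolynomial.eval x
              ((MvPolynomial.pderiv j (faceRestrict f τ)).map (Int.castRingHom F)) = 0 :=
  stmt18_general f hf hqh hnd
end
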